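/- In R the following identities hold: Q₂(Q₁(w₂)) = w₃⁴, Q₃(Q₁(w₂)) = w₂⁴·w₃⁴, and Q₄(Q₁(w₂)) = (w₂¹² + w₃⁸)·w₃⁴. -/

import Mathlib

/-!
A derivation in characteristic 2 kills squares, so `Q_m` only sees the non-square monomials:
`Q₁ w₂ = s₁⁴s₂ + s₁s₂⁴`, and then `Q_m (Q₁ w₂) = s₁⁴s₂^(2^(m+1)) + s₁^(2^(m+1))s₂⁴`.
Writing `a = s₁⁴`, `b = s₂⁴`, Frobenius gives `w₂⁴ = a² + ab + b²` and `w₃⁴ = a²b + ab²`, so the three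
identities are the mod 2 identities `ab(a + b) = a²b + ab²`, `ab(a³ + b³) = (a² + ab + b²)(a²b + ab²)`
and `ab(a⁷ + b⁷) = ((a² + ab + b²)³ + (a²b + ab²)²)(a²b + ab²)`.
-/

open MvPolynomial

/-- `R = ℤ/2[s₁, s₂]`, the mod 2 cohomology of `B(ℤ/2)²`. -/
noncomputable abbrev R : Type := MvPolynomial (Fin 2) (ZMod 2)

/-- The `m`-th Milnor operation `Q_m`, the derivation with `Q_m(sᵢ) = sᵢ^(2^(m+1))`. -/
noncomputable def Q (m : ℕ) : Derivation (ZMod 2) R R :=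
  MvPolynomial.mkDerivation (ZMod 2) (fun i : Fin 2 => (X i : R) ^ 2 ^ (m + 1))

/-- `w₂ = s₁² + s₁s₂ + s₂²`. -/
noncomputable def w₂ : R := X 0 ^ 2 + X 0 * X 1 + X 1 ^ 2

/-- `w₃ = s₁²s₂ + s₁s₂²`. -/
noncomputable def w₃ : R := X 0 ^ 2 * X 1 + X 0 * X 1 ^ 2

theorem Derivation.map_sq_eq_zero_of_charTwo {k A : Type*} [CommRing k] [CommRing A]
    [Algebra k A] [CharP A 2] (D : Derivation k A A) (a : A) : D (a ^ 2) = 0 := by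
  rw [D.leibniz_pow, two_nsmul, smul_eq_mul, ← two_mul, CharTwo.two_eq_zero, zero_mul]

theorem Q_X (m : ℕ) (i : Fin 2) : Q m (X i) = X i ^ 2 ^ (m + 1) :=
  mkDerivation_X _ _ _

theorem Q_one_w₂ : Q 1 w₂ = X 0 ^ 4 * X 1 + X 0 * X 1 ^ 4 := by
  simp only [w₂, map_add, Derivation.map_sq_eq_zero_of_charTwo, Derivation.leibniz, Q_X,
    smul_eq_mul]
  ring

theorem Q_Q_one_w₂ (m : ℕ) :
    Q m (Q 1 w₂) = X 0 ^ 4 * X 1 ^ 2 ^ (m + 1) + X 0 ^ 2 ^ (m + 1) * X 1 ^ 4 := by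
  have pow_four_eq_sq_sq : ∀ i : Fin 2, (X i : R) ^ 4 = (X i ^ 2) ^ 2 := fun i => by ring
  simp only [Q_one_w₂, map_add, Derivation.leibniz, pow_four_eq_sq_sq,
    Derivation.map_sq_eq_zero_of_charTwo, Q_X, smul_eq_mul]
  ring

theorem stmt_5 :
    Q 2 (Q 1 w₂) = w₃ ^ 4 ∧ Q 3 (Q 1 w₂) = w₂ ^ 4 * w₃ ^ 4 ∧
      Q 4 (Q 1 w₂) = (w₂ ^ 12 + w₃ ^ 8) * w₃ ^ 4 := by
  simp only [Q_Q_one_w₂]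
  unfold w₂ w₃
  refine ⟨?_, ?_, ?_⟩ <;> grind
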